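/- arXiv:0705.0090 — 3 statements merged into one kernel-verified Lean document; each statement's English description precedes it below -/
import Mathlib

section
/- Let a₁, a₂, c be integers with 1 ≤ a₁ < a₂ and c ≥ 1, and let ρ be the π-rotation anti-homomorphism of the Artin braid group B_{a₂}. Then ρ(W(a₂)^c · W(a₁)⁻¹) = W(a₂ - a₁ + 1) · W(a₂)^{c-1} in B_{a₂}; in particular, ρ(W(a₂)^c · W(a₁)⁻¹) is conjugate in B_{a₂} to W(a₂)^{c-1} · W(a₂ - a₁ + 1). -/
/-- The braid relations for the Artin braid group `B_n`, as a set of elements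
of the free group on generators `σ_1, …, σ_{n-1}` (indexed by `Fin (n-1)`,
where the index `i : Fin (n-1)` corresponds to the generator `σ_{i+1}`). -/
def braidRels (n : ℕ) : Set (FreeGroup (Fin (n - 1))) :=
  {r | ∃ i j : Fin (n - 1), (j : ℕ) = (i : ℕ) + 1 ∧
      r = FreeGroup.of i * FreeGroup.of j * FreeGroup.of i *
          (FreeGroup.of j * FreeGroup.of i * FreeGroup.of j)⁻¹} ∪
  {r | ∃ i j : Fin (n - 1), (i : ℕ) + 2 ≤ (j : ℕ) ∧
      r = FreeGroup.of i * FreeGroup.of j * (FreeGroup.of j * FreeGroup.of i)⁻¹}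

/-- The Artin braid group `B_n`. -/
abbrev BraidGroup (n : ℕ) := PresentedGroup (braidRels n)

/-- The generator `σ_i` of `B_n`, for `1 ≤ i ≤ n - 1` (junk value `1` otherwise). -/
def σ (n i : ℕ) : BraidGroup n :=
  if h : 1 ≤ i ∧ i ≤ n - 1 then PresentedGroup.of (⟨i - 1, by omega⟩ : Fin (n - 1)) else 1

/-- `W n m` is the element `W(m) = σ_{m-1} σ_{m-2} ⋯ σ_1` of `B_n`, with `W(1) = 1`. -/
def W (n : ℕ) : ℕ → BraidGroup n
  | 0 => 1
  | m + 1 => σ n m * W n m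

/-- For `1 ≤ a₁ < a₂`, `c ≥ 1` and the π-rotation anti-homomorphism `ρ` of `B_{a₂}`,
one has `ρ(W(a₂)^c W(a₁)⁻¹) = W(a₂ - a₁ + 1) W(a₂)^{c-1}`; in particular
`ρ(W(a₂)^c W(a₁)⁻¹)` is conjugate in `B_{a₂}` to `W(a₂)^{c-1} W(a₂ - a₁ + 1)`. -/
theorem pi_rotation_W_pow_mul_W_inv (a₁ a₂ c : ℕ) (h1 : 1 ≤ a₁) (h12 : a₁ < a₂) (hc : 1 ≤ c)
    (ρ : BraidGroup a₂ → BraidGroup a₂)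
    (hmul : ∀ x y, ρ (x * y) = ρ y * ρ x) (hone : ρ 1 = 1)
    (hσ : ∀ i, 1 ≤ i → i ≤ a₂ - 1 → ρ (σ a₂ i) = σ a₂ (a₂ - i)) :
    ρ (W a₂ a₂ ^ c * (W a₂ a₁)⁻¹) = W a₂ (a₂ - a₁ + 1) * W a₂ a₂ ^ (c - 1) ∧
    IsConj (W a₂ a₂ ^ (c - 1) * W a₂ (a₂ - a₁ + 1)) (ρ (W a₂ a₂ ^ c * (W a₂ a₁)⁻¹)) := by
  have hinv : ∀ x, ρ x⁻¹ = (ρ x)⁻¹ := by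
    intro x
    have h := hmul x x⁻¹
    rw [mul_inv_cancel, hone] at h
    exact eq_inv_of_mul_eq_one_left h.symm
  have hpow : ∀ (x : BraidGroup a₂) (k : ℕ), ρ (x ^ k) = ρ x ^ k := by
    intro x k
    induction k with
    | zero => simp [hone]
    | succ k ih => rw [pow_succ, hmul, ih, ← pow_succ']
  have hW1 : W a₂ 1 = 1 := by
    show σ a₂ 0 * W a₂ 0 = 1
    have : σ a₂ 0 = 1 := by simp [σ]
    rw [this]
    show (1 : BraidGroup a₂) * 1 = 1
    simp
  have key : ∀ m, 1 ≤ m → m ≤ a₂ → ρ (W a₂ m) * W a₂ (a₂ - m + 1) = W a₂ a₂ := by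
    intro m hm
    induction m, hm using Nat.le_induction with
    | base =>
      intro _
      rw [hW1, hone, one_mul, Nat.sub_add_cancel (by omega)]
    | succ m hm ih =>
      intro hle
      have h1 : W a₂ (m + 1) = σ a₂ m * W a₂ m := rfl
      rw [h1, hmul, hσ m hm (by omega)]
      have h2 : a₂ - (m + 1) + 1 = a₂ - m := by omega
      rw [h2, mul_assoc]
      have h4 : σ a₂ (a₂ - m) * W a₂ (a₂ - m) = W a₂ (a₂ - m + 1) := rfl
      rw [h4]
      exact ih (by omega)
  have hsplit : W a₂ a₂ = ρ (W a₂ a₁) * W a₂ (a₂ - a₁ + 1) :=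
    (key a₁ h1 (le_of_lt h12)).symm
  have hmain : ρ (W a₂ a₂ ^ c * (W a₂ a₁)⁻¹) = W a₂ (a₂ - a₁ + 1) * W a₂ a₂ ^ (c - 1) := by
    have hfix : ρ (W a₂ a₂) = W a₂ a₂ := by
      have h := key a₂ (by omega) le_rfl
      rw [show a₂ - a₂ + 1 = 1 by omega, hW1, mul_one] at h
      exact h
    rw [hmul, hinv, hpow, hfix]
    have hcsplit : W a₂ a₂ ^ c = W a₂ a₂ * W a₂ a₂ ^ (c - 1) := by
      conv_lhs => rw [show c = 1 + (c - 1) by omega]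
      rw [pow_add, pow_one]
    rw [hcsplit]
    generalize W a₂ a₂ ^ (c - 1) = y
    rw [hsplit]
    group
  refine ⟨hmain, ?_⟩
  rw [hmain, isConj_iff]
  exact ⟨W a₂ (a₂ - a₁ + 1), by group⟩
end

section
/- Let m ≥ 2 and let n be an integer with 2 ≤ n ≤ m. In the Artin braid group B_m: if n is odd then G(n-2)⁻¹ · e(n)·o(n) · G(n-2) = W(n), and if n is even then G(n-2)⁻¹ · o(n)·e(n) · G(n-2) = W(n). -/
/-- `eB m k` is the product `e(k)` of the generators `σ_i` of `B_m` over even `i`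
with `2 ≤ i < k` (the factors commute, so the order is irrelevant; note `σ m 0 = 1`). -/
def eB (m k : ℕ) : BraidGroup m :=
  (((List.range k).filter (fun i => i % 2 = 0)).map (σ m)).prod

/-- `oB m k` is the product `o(k)` of the generators `σ_i` of `B_m` over odd `i`
with `1 ≤ i < k` (the factors commute, so the order is irrelevant). -/
def oB (m k : ℕ) : BraidGroup m :=
  (((List.range k).filter (fun i => i % 2 = 1)).map (σ m)).prod

/-- The elements `G(k)` of `B_m`: `G(0) = G(1) = 1`, and for `k ≥ 2`,
`G(k) = e(k+1) o(k) G(k-2)` if `k` is odd, `G(k) = o(k+1) e(k) G(k-2)` if `k` is even. -/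
def G (m : ℕ) : ℕ → BraidGroup m
  | 0 => 1
  | 1 => 1
  | k + 2 => if (k + 2) % 2 = 1 then eB m (k + 3) * oB m (k + 2) * G m k
             else oB m (k + 3) * eB m (k + 2) * G m k

lemma commute_σ_σ (m : ℕ) {i j : ℕ} (h : i + 2 ≤ j) : Commute (σ m i) (σ m j) := by
  unfold σ
  split_ifs
  · exact PresentedGroup.mk_eq_mk_of_mul_inv_mem <| Or.inr ⟨_, _, by simp only; omega, rfl⟩
  all_goals simp

lemma σ_zero (m : ℕ) : σ m 0 = 1 := by simp [σ]

lemma commute_σ_eB (m : ℕ) {j k : ℕ} (h : k + 1 ≤ j) : Commute (σ m j) (eB m k) :=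
  Commute.list_prod_right _ _ fun _ hx => by
    obtain ⟨i, hi, rfl⟩ := List.mem_map.mp hx
    exact (commute_σ_σ m (by simp only [List.mem_filter, List.mem_range] at hi; omega)).symm

lemma commute_σ_oB (m : ℕ) {j k : ℕ} (h : k + 1 ≤ j) : Commute (σ m j) (oB m k) :=
  Commute.list_prod_right _ _ fun _ hx => by
    obtain ⟨i, hi, rfl⟩ := List.mem_map.mp hx
    exact (commute_σ_σ m (by simp only [List.mem_filter, List.mem_range] at hi; omega)).symm

lemma eB_succ_of_even (m : ℕ) {k : ℕ} (h : Even k) : eB m (k + 1) = eB m k * σ m k := by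
  simp [eB, List.range_succ, Nat.even_iff.mp h]

lemma eB_succ_of_odd (m : ℕ) {k : ℕ} (h : Odd k) : eB m (k + 1) = eB m k := by
  simp [eB, List.range_succ, Nat.odd_iff.mp h]

lemma oB_succ_of_odd (m : ℕ) {k : ℕ} (h : Odd k) : oB m (k + 1) = oB m k * σ m k := by
  simp [oB, List.range_succ, Nat.odd_iff.mp h]

lemma oB_succ_of_even (m : ℕ) {k : ℕ} (h : Even k) : oB m (k + 1) = oB m k := by
  simp [oB, List.range_succ, Nat.even_iff.mp h]

def topProd (m n : ℕ) : BraidGroup m :=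
  if Even n then oB m n else eB m n

lemma topProd_of_even (m : ℕ) {n : ℕ} (h : Even n) : topProd m n = oB m n := if_pos h

lemma topProd_of_odd (m : ℕ) {n : ℕ} (h : Odd n) : topProd m n = eB m n :=
  if_neg (Nat.not_even_iff_odd.mpr h)

lemma topProd_add_two (m n : ℕ) : topProd m (n + 2) = topProd m n * σ m (n + 1) := by
  rcases Nat.even_or_odd n with hn | hn
  · rw [topProd_of_even m (hn.add even_two), topProd_of_even m hn, ← oB_succ_of_even m hn]
    exact oB_succ_of_odd m hn.add_one
  · rw [topProd_of_odd m (hn.add_even even_two), topProd_of_odd m hn, ← eB_succ_of_odd m hn]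
    exact eB_succ_of_even m hn.add_one

lemma commute_σ_topProd (m : ℕ) {j n : ℕ} (h : n + 1 ≤ j) :
    Commute (σ m j) (topProd m n) := by
  unfold topProd
  split_ifs
  exacts [commute_σ_oB m h, commute_σ_eB m h]

lemma G_add_two_of_odd (m : ℕ) {k : ℕ} (hk : Odd k) :
    G m (k + 2) = eB m (k + 2) * oB m (k + 2) * G m k := by
  rw [G, if_pos (Nat.odd_iff.mp (hk.add_even even_two)), eB_succ_of_odd m (hk.add_even even_two),
    oB_succ_of_even m hk.add_one]

lemma G_add_two_of_even (m : ℕ) {k : ℕ} (hk : Even k) :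
    G m (k + 2) = oB m (k + 2) * eB m (k + 2) * G m k := by
  rw [G, if_neg (Nat.odd_iff.not.mp (Nat.not_odd_iff_even.mpr (hk.add even_two))),
    oB_succ_of_even m (hk.add even_two), eB_succ_of_odd m hk.add_one]

lemma G_add_two (m k : ℕ) : G m (k + 2) = topProd m (k + 2) * topProd m (k + 1) * G m k := by
  rcases Nat.even_or_odd k with hk | hk
  · rw [G_add_two_of_even m hk, topProd_of_even m (hk.add even_two), topProd_of_odd m hk.add_one,
      eB_succ_of_odd m hk.add_one]
  · rw [G_add_two_of_odd m hk, topProd_of_odd m (hk.add_even even_two),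
      topProd_of_even m hk.add_one, oB_succ_of_even m hk.add_one]

lemma G_succ (m k : ℕ) : G m (k + 1) = topProd m (k + 1) * G m k := by
  induction k with
  | zero => simp [G, topProd_of_odd m odd_one, eB, σ_zero]
  | succ k ih => rw [G_add_two, ih, mul_assoc]

lemma commute_σ_G (m : ℕ) {j k : ℕ} (h : k + 1 ≤ j) : Commute (σ m j) (G m k) := by
  induction k with
  | zero => exact Commute.one_right _
  | succ k ih => rw [G_succ]; exact (commute_σ_topProd m h).mul_right (ih (by omega))

lemma G_add_two_eq_mul_W (m k : ℕ) : G m (k + 2) = G m k * W m (k + 2) := by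
  induction k with
  | zero => simp [G, W, eB, oB, σ_zero, List.range_succ]
  | succ k ih =>
    calc G m (k + 3)
        = topProd m (k + 1) * σ m (k + 2) * G m (k + 2) := by rw [G_succ, topProd_add_two]
      _ = topProd m (k + 1) * (σ m (k + 2) * G m k) * W m (k + 2) := by
          rw [ih, mul_assoc, mul_assoc, mul_assoc]
      _ = topProd m (k + 1) * G m k * (σ m (k + 2) * W m (k + 2)) := by
          rw [(commute_σ_G m (by omega)).eq]; group
      _ = G m (k + 1) * W m (k + 3) := by rw [← G_succ]; rfl

theorem conj_eo_by_G_general (m n : ℕ) (hn : 2 ≤ n) :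
    (Odd n → (G m (n - 2))⁻¹ * (eB m n * oB m n) * G m (n - 2) = W m n) ∧
    (Even n → (G m (n - 2))⁻¹ * (oB m n * eB m n) * G m (n - 2) = W m n) := by
  obtain ⟨k, rfl⟩ : ∃ k, n = k + 2 := ⟨n - 2, by omega⟩
  rw [Nat.add_sub_cancel]
  refine ⟨fun hn => ?_, fun hn => ?_⟩
  · rw [mul_assoc, ← G_add_two_of_odd m ((Nat.odd_add.mp hn).mpr even_two), G_add_two_eq_mul_W,
      inv_mul_cancel_left]
  · rw [mul_assoc, ← G_add_two_of_even m ((Nat.even_add.mp hn).mpr even_two), G_add_two_eq_mul_W,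
      inv_mul_cancel_left]

/-- In `B_m`, for `2 ≤ n ≤ m`: if `n` is odd then `G(n-2)⁻¹ e(n) o(n) G(n-2) = W(n)`,
and if `n` is even then `G(n-2)⁻¹ o(n) e(n) G(n-2) = W(n)`. -/
theorem conj_eo_by_G (m n : ℕ) (hm : 2 ≤ m) (hn : 2 ≤ n) (hnm : n ≤ m) :
    (Odd n → (G m (n - 2))⁻¹ * (eB m n * oB m n) * G m (n - 2) = W m n) ∧
    (Even n → (G m (n - 2))⁻¹ * (oB m n * eB m n) * G m (n - 2) = W m n) :=
  conj_eo_by_G_general m n hn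
end

section
/- Let a₁, a₂ be integers with 2 ≤ a₁ < a₂, and set Ω(a₁,a₂) := H(a₁,a₂)⁻¹ · G(a₁ - 2) in the Artin braid group B_{a₂}. Then: if a₁ is odd, Ω(a₁,a₂)⁻¹ · e(a₂)·o(a₂) · Ω(a₁,a₂) = W(a₁)·W(a₂)·W(a₁)⁻¹; and if a₁ is even, Ω(a₁,a₂)⁻¹ · o(a₂)·e(a₂) · Ω(a₁,a₂) = W(a₁)·W(a₂)·W(a₁)⁻¹. -/
/-!
Write `P(n)` for whichever of `e(n)o(n)`, `o(n)e(n)` has the factor containing `σ_{n-1}` first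
(`altProd m (n + 1) 0 n`). Only the far commutation relations are needed. Since
`P(n+2) = P(n) σ_{n+1} σ_n` and `G(n) = P(n) G(n-2)`, induction gives `P(n) G(n-2) = G(n-2) W(n)`.

For `a = a₁` the middle factor of the theorem splits as `P(a) U`, where `U` is the analogous
product over the indices in `[a, a₂)`, and the anti-homomorphism `ρ` carries the identity for
`n = a₂ - a + 1` to `H U = V H` with `V = ρ(W(a₂ - a + 1)) = σ_{a₂-1} ⋯ σ_a`. As `H` involves only
generators `σ_i` with `i ≥ a + 2` and `G(a-2)` only those with `i ≤ a - 3`, conjugation gives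
`Ω⁻¹ P(a) U Ω = G(a-2)⁻¹ P(a) V G(a-2) = W(a) V`, while `W(a₂) = V W(a)`.
-/

theorem Subgroup.commute_of_mem_closure {M : Type*} [Group M] {S T : Set M}
    (hST : ∀ s ∈ S, ∀ t ∈ T, Commute s t) {x y : M}
    (hx : x ∈ Subgroup.closure S) (hy : y ∈ Subgroup.closure T) : Commute x y := by
  have hy' : y ∈ Subgroup.centralizer S :=
    (Subgroup.closure_le _).2
      (fun t ht => Subgroup.mem_centralizer_iff.2 fun s hs => (hST s hs t ht).eq) hy
  exact ((Subgroup.mem_centralizer_iff.1 (Subgroup.closure_le_centralizer_centralizer S hx))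
    y hy').symm

namespace Braid

variable {m : ℕ}

lemma σ_eq_one {i : ℕ} (h : ¬(1 ≤ i ∧ i ≤ m - 1)) : σ m i = 1 := dif_neg h

@[simp] lemma σ_zero : σ m 0 = 1 := σ_eq_one (by omega)

@[simp] lemma σ_self : σ m m = 1 := σ_eq_one (by omega)

lemma commute_σ_σ {i j : ℕ} (h : i + 2 ≤ j) : Commute (σ m i) (σ m j) := by
  by_cases hi : 1 ≤ i ∧ i ≤ m - 1
  · by_cases hj : 1 ≤ j ∧ j ≤ m - 1
    · rw [σ, σ, dif_pos hi, dif_pos hj]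
      have hrel := PresentedGroup.mk_eq_mk_of_mul_inv_mem (rels := braidRels m)
        (Or.inr ⟨⟨i - 1, by omega⟩, ⟨j - 1, by omega⟩, by simp only; omega, rfl⟩)
      rw [map_mul, map_mul] at hrel
      exact hrel
    · rw [σ_eq_one hj]; exact Commute.one_right _
  · rw [σ_eq_one hi]; exact Commute.one_left _

def gens (m : ℕ) (A : Set ℕ) : Subgroup (BraidGroup m) := Subgroup.closure (σ m '' A)

lemma σ_mem_gens {A : Set ℕ} {i : ℕ} (h : i ∈ A) : σ m i ∈ gens m A :=
  Subgroup.subset_closure (Set.mem_image_of_mem _ h)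

lemma gens_mono {A B : Set ℕ} (h : A ⊆ B) : gens m A ≤ gens m B :=
  Subgroup.closure_mono (Set.image_mono h)

lemma commute_of_mem_gens {A B : Set ℕ} (hAB : ∀ i ∈ A, ∀ j ∈ B, i + 2 ≤ j)
    {x y : BraidGroup m} (hx : x ∈ gens m A) (hy : y ∈ gens m B) : Commute x y :=
  Subgroup.commute_of_mem_closure
    (by rintro _ ⟨i, hi, rfl⟩ _ ⟨j, hj, rfl⟩; exact commute_σ_σ (hAB i hi j hj)) hx hy

def parityProd (m p l u : ℕ) : BraidGroup m :=
  (((List.range' l (u - l)).filter (fun i => i % 2 = p % 2)).map (σ m)).prod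

def altProd (m q l u : ℕ) : BraidGroup m := parityProd m q l u * parityProd m (q + 1) l u

lemma eB_eq_parityProd (k : ℕ) : eB m k = parityProd m 0 0 k := by
  simp [eB, parityProd, List.range_eq_range']

lemma oB_eq_parityProd (k : ℕ) : oB m k = parityProd m 1 0 k := by
  simp [oB, parityProd, List.range_eq_range']

lemma parityProd_congr {p p' : ℕ} (h : p % 2 = p' % 2) (l u : ℕ) :
    parityProd m p l u = parityProd m p' l u := by
  simp only [parityProd, h]

lemma eB_mul_oB (k : ℕ) : eB m k * oB m k = altProd m 0 0 k := by
  rw [eB_eq_parityProd, oB_eq_parityProd, altProd]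

lemma oB_mul_eB (k : ℕ) : oB m k * eB m k = altProd m 1 0 k := by
  rw [eB_eq_parityProd, oB_eq_parityProd, altProd,
    parityProd_congr (by omega : 0 % 2 = (1 + 1) % 2)]

lemma altProd_congr {q q' : ℕ} (h : q % 2 = q' % 2) (l u : ℕ) :
    altProd m q l u = altProd m q' l u := by
  rw [altProd, altProd, parityProd_congr h,
    parityProd_congr (by omega : (q + 1) % 2 = (q' + 1) % 2)]

lemma parityProd_self (p l : ℕ) : parityProd m p l l = 1 := by
  simp [parityProd]

lemma parityProd_single (p u : ℕ) :
    parityProd m p u (u + 1) = if u % 2 = p % 2 then σ m u else 1 := by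
  by_cases h : u % 2 = p % 2 <;> simp [parityProd, h]

lemma parityProd_append {p l k u : ℕ} (hlk : l ≤ k) (hku : k ≤ u) :
    parityProd m p l u = parityProd m p l k * parityProd m p k u := by
  obtain ⟨a, rfl⟩ := Nat.exists_eq_add_of_le hlk
  obtain ⟨b, rfl⟩ := Nat.exists_eq_add_of_le hku
  rw [parityProd, parityProd, parityProd, ← List.prod_append, ← List.map_append,
    ← List.filter_append, Nat.add_sub_cancel_left, Nat.add_sub_cancel_left, Nat.add_assoc,
    Nat.add_sub_cancel_left, List.range'_append_1]

lemma parityProd_succ {p l u : ℕ} (hlu : l ≤ u) :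
    parityProd m p l (u + 1) = parityProd m p l u * if u % 2 = p % 2 then σ m u else 1 := by
  rw [parityProd_append hlu u.le_succ, parityProd_single]

lemma parityProd_succ_self {p l : ℕ} (hl : l ≤ m) :
    parityProd m p l (m + 1) = parityProd m p l m := by
  rw [parityProd_succ hl, σ_self, ite_self, mul_one]

lemma altProd_succ_self {q l : ℕ} (hl : l ≤ m) : altProd m q l (m + 1) = altProd m q l m := by
  rw [altProd, altProd, parityProd_succ_self hl, parityProd_succ_self hl]

lemma parityProd_mem_gens (p l u : ℕ) :
    parityProd m p l u ∈ gens m {i | l ≤ i ∧ i < u ∧ i % 2 = p % 2} := by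
  refine list_prod_mem fun x hx => ?_
  simp only [List.mem_map, List.mem_filter, List.mem_range'_1, decide_eq_true_eq] at hx
  obtain ⟨i, ⟨⟨hli, hiu⟩, hip⟩, rfl⟩ := hx
  exact σ_mem_gens ⟨hli, by omega, hip⟩

lemma altProd_mem_gens (q l u : ℕ) : altProd m q l u ∈ gens m (Set.Ico l u) := by
  refine mul_mem (gens_mono ?_ (parityProd_mem_gens _ _ _))
    (gens_mono ?_ (parityProd_mem_gens _ _ _)) <;> exact fun _ hi => ⟨hi.1, hi.2.1⟩

lemma altProd_split {q l k u : ℕ} (hq : (q + 1) % 2 = k % 2) (hlk : l ≤ k) (hku : k ≤ u) :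
    altProd m q l u = altProd m q l k * altProd m q k u := by
  have hc : Commute (parityProd m (q + 1) l k) (parityProd m q k u) :=
    commute_of_mem_gens (by rintro i ⟨-, hik, hi⟩ j ⟨hkj, -, hj⟩; omega)
      (parityProd_mem_gens _ _ _) (parityProd_mem_gens _ _ _)
  rw [altProd, altProd, altProd, parityProd_append hlk hku, parityProd_append hlk hku]
  simp only [mul_assoc]
  rw [← mul_assoc (parityProd m q k u), ← hc.eq, mul_assoc]

lemma altProd_add_two {q l u : ℕ} (hq : q % 2 = (u + 1) % 2) (hlu : l ≤ u) :
    altProd m q l (u + 2) = altProd m q l u * (σ m (u + 1) * σ m u) := by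
  have hq_succ : parityProd m q l (u + 2) = parityProd m q l u * σ m (u + 1) := by
    rw [parityProd_succ (by omega), parityProd_succ hlu, if_neg (by omega), if_pos (by omega),
      mul_one]
  have hq1_succ : parityProd m (q + 1) l (u + 2) = parityProd m (q + 1) l u * σ m u := by
    rw [parityProd_succ (by omega), parityProd_succ hlu, if_pos (by omega), if_neg (by omega),
      mul_one]
  have hc : Commute (parityProd m (q + 1) l u) (σ m (u + 1)) :=
    commute_of_mem_gens (by rintro i ⟨-, hiu, hi⟩ j rfl; omega)
      (parityProd_mem_gens _ _ _) (σ_mem_gens rfl)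
  rw [altProd, altProd, hq_succ, hq1_succ]
  simp only [mul_assoc]
  rw [← mul_assoc (σ m (u + 1)), ← hc.eq, mul_assoc]

lemma G_add_two (k : ℕ) : G m (k + 2) = altProd m (k + 1) 0 (k + 2) * G m k := by
  rw [G, eB_eq_parityProd, oB_eq_parityProd, eB_eq_parityProd, oB_eq_parityProd]
  split_ifs with h
  · rw [parityProd_succ (Nat.zero_le _), if_neg (by omega), mul_one, altProd,
      parityProd_congr (by omega : (k + 1) % 2 = 0 % 2),
      parityProd_congr (by omega : (k + 1 + 1) % 2 = 1 % 2)]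
  · rw [parityProd_succ (Nat.zero_le _), if_neg (by omega), mul_one, altProd,
      parityProd_congr (by omega : (k + 1) % 2 = 1 % 2),
      parityProd_congr (by omega : (k + 1 + 1) % 2 = 0 % 2)]

lemma G_mem_gens : ∀ k, G m k ∈ gens m (Set.Iio k)
  | 0 | 1 => one_mem _
  | k + 2 => G_add_two k ▸ mul_mem (gens_mono (fun _ hi => hi.2) (altProd_mem_gens _ _ _))
      (gens_mono (Set.Iio_subset_Iio (by omega)) (G_mem_gens k))

lemma W_mem_gens : ∀ k, W m k ∈ gens m (Set.Iio k)
  | 0 => one_mem _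
  | k + 1 => mul_mem (σ_mem_gens (Nat.lt_succ_self k))
      (gens_mono (Set.Iio_subset_Iio k.le_succ) (W_mem_gens k))

lemma G_mul_W : ∀ k, G m k * W m (k + 2) = altProd m (k + 1) 0 (k + 2) * G m k
  | 0 => by simp [G, W, altProd, parityProd, List.range']
  | 1 => by simp [G, W, altProd, parityProd, List.range']
  | k + 2 => by
    have hc : Commute (G m k) (σ m (k + 3) * σ m (k + 2)) :=
      commute_of_mem_gens (B := Set.Ici (k + 2))
        (fun i (hi : i < k) j (hj : k + 2 ≤ j) => by omega) (G_mem_gens k)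
        (mul_mem (σ_mem_gens (by simp)) (σ_mem_gens (Set.mem_Ici.2 le_rfl)))
    have hW : W m (k + 4) = σ m (k + 3) * σ m (k + 2) * W m (k + 2) := by
      simp only [W, mul_assoc]
    calc G m (k + 2) * W m (k + 4)
        = altProd m (k + 1) 0 (k + 2) * (G m k * (σ m (k + 3) * σ m (k + 2))) *
            W m (k + 2) := by
          rw [G_add_two, hW]; group
      _ = altProd m (k + 1) 0 (k + 2) * (σ m (k + 3) * σ m (k + 2)) *
            (G m k * W m (k + 2)) := by
          rw [hc.eq]; group
      _ = altProd m (k + 3) 0 (k + 4) * G m (k + 2) := by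
          rw [G_mul_W k, G_add_two, altProd_add_two (u := k + 2) (by omega) (by omega),
            altProd_congr (by omega : (k + 3) % 2 = (k + 1) % 2)]

section AntiHom

variable {ρ : BraidGroup m → BraidGroup m}
  (hmul : ∀ x y, ρ (x * y) = ρ y * ρ x) (hone : ρ 1 = 1)
  (hσ : ∀ i, 1 ≤ i → i ≤ m - 1 → ρ (σ m i) = σ m (m - i))

include hmul hone in
lemma ρ_inv (x : BraidGroup m) : ρ x⁻¹ = (ρ x)⁻¹ :=
  eq_inv_of_mul_eq_one_left (by rw [← hmul, mul_inv_cancel, hone])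

include hone hσ in
lemma ρ_σ {i : ℕ} (hi : i ≤ m) : ρ (σ m i) = σ m (m - i) := by
  rcases Nat.eq_zero_or_pos i with rfl | hi0
  · rw [σ_zero, hone, Nat.sub_zero, σ_self]
  rcases hi.lt_or_eq with hlt | rfl
  · exact hσ i hi0 (by omega)
  · rw [σ_self, hone, Nat.sub_self, σ_zero]

include hmul hone hσ in
lemma ρ_mem_gens {A : Set ℕ} (hA : ∀ i ∈ A, i ≤ m) {x : BraidGroup m}
    (hx : x ∈ gens m A) : ρ x ∈ gens m ((m - ·) '' A) := by
  induction hx using Subgroup.closure_induction with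
  | mem _ h =>
    obtain ⟨i, hi, rfl⟩ := h
    rw [ρ_σ hone hσ (hA i hi)]
    exact σ_mem_gens (Set.mem_image_of_mem _ hi)
  | one => rw [hone]; exact one_mem _
  | mul x y _ _ hx hy => rw [hmul]; exact mul_mem hy hx
  | inv x _ hx => rw [ρ_inv hmul hone]; exact inv_mem hx

include hmul hone hσ in
lemma ρ_parityProd {p l u : ℕ} (hlu : l ≤ u) (hum : u ≤ m + 1) :
    ρ (parityProd m p l u) = parityProd m (m + p) (m + 1 - u) (m + 1 - l) := by
  induction u, hlu using Nat.le_induction with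
  | base => rw [parityProd_self, parityProd_self, hone]
  | succ u hlu ih =>
    rw [parityProd_succ hlu, hmul, ih (by omega), show m + 1 - (u + 1) = m - u by omega,
      show m + 1 - u = m - u + 1 by omega]
    conv_rhs => rw [parityProd_append (k := m - u + 1) (by omega) (by omega), parityProd_single]
    congr 1
    by_cases h : u % 2 = p % 2
    · rw [if_pos h, if_pos (by omega), ρ_σ hone hσ (by omega)]
    · rw [if_neg h, if_neg (by omega), hone]

include hmul hone hσ in
lemma ρ_altProd {q l u : ℕ} (hlu : l ≤ u) (hum : u ≤ m + 1) :
    ρ (altProd m q l u) = altProd m (m + q + 1) (m + 1 - u) (m + 1 - l) := by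
  rw [altProd, hmul, ρ_parityProd hmul hone hσ hlu hum, ρ_parityProd hmul hone hσ hlu hum,
    altProd, parityProd_congr (by omega : (m + (q + 1)) % 2 = (m + q + 1) % 2),
    parityProd_congr (by omega : (m + q) % 2 = (m + q + 1 + 1) % 2)]

include hmul hone hσ in
lemma ρ_W_mul_W {k : ℕ} (hk : k ≤ m) : ρ (W m k) * W m (m + 1 - k) = W m m := by
  induction k with
  | zero =>
    show ρ 1 * (σ m m * W m m) = W m m
    rw [hone, σ_self, one_mul, one_mul]
  | succ k ih =>
    rw [← ih (by omega), show m + 1 - k = m - k + 1 by omega,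
      show m + 1 - (k + 1) = m - k by omega]
    show ρ (σ m k * W m k) * _ = ρ (W m k) * (σ m (m - k) * W m (m - k))
    rw [hmul, ρ_σ hone hσ (by omega : k ≤ m), mul_assoc]

include hmul hone hσ in
lemma ρ_G_mul_altProd {a : ℕ} (ham : a < m) :
    ρ (G m (m - a - 1)) * altProd m (a + 1) a m = ρ (W m (m - a + 1)) * ρ (G m (m - a - 1)) := by
  have h := congrArg ρ (G_mul_W (m := m) (m - a - 1))
  rw [hmul, hmul, ρ_altProd hmul hone hσ (by omega) (by omega),
    show m - a - 1 + 2 = m - a + 1 by omega, show m + 1 - (m - a + 1) = a by omega,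
    Nat.sub_zero, altProd_succ_self (by omega),
    altProd_congr (by omega : (m + (m - a - 1 + 1) + 1) % 2 = (a + 1) % 2)] at h
  exact h.symm

include hmul hone hσ in
lemma conj_altProd_by_Omega {a q : ℕ} (ha : 2 ≤ a) (ham : a < m) (hq : q % 2 = (a + 1) % 2) :
    ((ρ (G m (m - a - 1)))⁻¹ * G m (a - 2))⁻¹ * altProd m q 0 m *
      ((ρ (G m (m - a - 1)))⁻¹ * G m (a - 2)) = W m a * W m m * (W m a)⁻¹ := by
  set H := ρ (G m (m - a - 1))
  set L := G m (a - 2)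
  set V := ρ (W m (m - a + 1))
  have hlow : L * W m a = altProd m q 0 a * L := by
    obtain ⟨k, rfl⟩ := Nat.exists_eq_add_of_le' ha
    rw [altProd_congr (by omega : q % 2 = (k + 1) % 2)]
    simpa [L] using G_mul_W (m := m) k
  have hup : H * altProd m q a m = V * H := by
    rw [altProd_congr hq]
    exact ρ_G_mul_altProd hmul hone hσ ham
  have hHA : Commute H (altProd m q 0 a) :=
    (commute_of_mem_gens (by rintro i ⟨-, hi⟩ _ ⟨j, (hj : j < _), rfl⟩; dsimp only; omega)
      (altProd_mem_gens q 0 a)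
      (ρ_mem_gens hmul hone hσ (fun i (hi : i < _) => by omega) (G_mem_gens _))).symm
  have hLV : Commute L V :=
    commute_of_mem_gens (by rintro i (hi : i < _) _ ⟨j, (hj : j < _), rfl⟩; dsimp only; omega)
      (G_mem_gens _) (ρ_mem_gens hmul hone hσ (fun i (hi : i < _) => by omega) (W_mem_gens _))
  have hVW : V * W m a = W m m := by
    have h := ρ_W_mul_W hmul hone hσ (k := m - a + 1) (by omega)
    rwa [show m + 1 - (m - a + 1) = a by omega] at h
  rw [altProd_split (by omega) (Nat.zero_le a) ham.le]
  calc _ = L⁻¹ * (H * altProd m q 0 a) * altProd m q a m * H⁻¹ * L := by group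
    _ = L⁻¹ * altProd m q 0 a * (H * altProd m q a m) * H⁻¹ * L := by rw [hHA.eq]; group
    _ = L⁻¹ * altProd m q 0 a * (V * L) := by rw [hup]; group
    _ = W m a * V := by rw [← hLV.eq, ← mul_assoc, mul_assoc L⁻¹, ← hlow]; group
    _ = W m a * W m m * (W m a)⁻¹ := by rw [← hVW]; group

end AntiHom

end Braid

open Braid

/-- For `2 ≤ a₁ < a₂`, with `H(a₁,a₂) := ρ(G(a₂ - a₁ - 1))` and
`Ω(a₁,a₂) := H(a₁,a₂)⁻¹ G(a₁ - 2)` in `B_{a₂}`: if `a₁` is odd then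
`Ω⁻¹ e(a₂) o(a₂) Ω = W(a₁) W(a₂) W(a₁)⁻¹`, and if `a₁` is even then
`Ω⁻¹ o(a₂) e(a₂) Ω = W(a₁) W(a₂) W(a₁)⁻¹`. -/
theorem conj_eo_high_by_Omega (a₁ a₂ : ℕ) (h1 : 2 ≤ a₁) (h12 : a₁ < a₂)
    (ρ : BraidGroup a₂ → BraidGroup a₂)
    (hmul : ∀ x y, ρ (x * y) = ρ y * ρ x) (hone : ρ 1 = 1)
    (hσ : ∀ i, 1 ≤ i → i ≤ a₂ - 1 → ρ (σ a₂ i) = σ a₂ (a₂ - i)) :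
    (Odd a₁ →
      ((ρ (G a₂ (a₂ - a₁ - 1)))⁻¹ * G a₂ (a₁ - 2))⁻¹ * (eB a₂ a₂ * oB a₂ a₂) *
        ((ρ (G a₂ (a₂ - a₁ - 1)))⁻¹ * G a₂ (a₁ - 2)) =
        W a₂ a₁ * W a₂ a₂ * (W a₂ a₁)⁻¹) ∧
    (Even a₁ →
      ((ρ (G a₂ (a₂ - a₁ - 1)))⁻¹ * G a₂ (a₁ - 2))⁻¹ * (oB a₂ a₂ * eB a₂ a₂) *
        ((ρ (G a₂ (a₂ - a₁ - 1)))⁻¹ * G a₂ (a₁ - 2)) =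
        W a₂ a₁ * W a₂ a₂ * (W a₂ a₁)⁻¹) := by
  refine ⟨fun hodd => ?_, fun heven => ?_⟩
  · rw [eB_mul_oB]
    exact conj_altProd_by_Omega hmul hone hσ h1 h12 (by have := Nat.odd_iff.mp hodd; omega)
  · rw [oB_mul_eB]
    exact conj_altProd_by_Omega hmul hone hσ h1 h12 (by have := Nat.even_iff.mp heven; omega)
end
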